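/- arXiv:2208.05287 — 2 statements merged into one kernel-verified Lean document; each statement's English description precedes it below -/
import Mathlib

section
/- (Theorem 4, GraD with a constant cap: linear convergence to a neighbourhood.) Assume each f_i is convex and L-smooth (L > 0), f is μ-strongly convex with minimizer x*, and for each i there is a global minimizer y_i of f_i; set D = (1/N)·∑_i ‖y_i − x*‖². Fix a cap Γ > 0, define γ_s(x) = min{Γ, pgd_s(x)}, assume ḡ_s(x) ≠ 0 for all x ≠ x* and all minibatches s, and suppose γmin > 0 satisfies μ·γmin ≤ 2·L and γ_s(x) ≥ γmin for all x ≠ x* and all s. Fix x^0 and for each sequence of minibatches define x^{k+1} = x^k − (1/(2L))·γ_{s^k}(x^k)·ḡ_{s^k}(x^k) (leaving x^k unchanged when ḡ_{s^k}(x^k) = 0). Then the average over all N^{nK} sequences of minibatches of ‖x^K − x*‖² is at most (1 − μ·γmin/(2L))^K·‖x^0 − x*‖² + 8·L·Γ·D/(μ·γmin). -/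
set_option maxHeartbeats 1000000

open scoped BigOperators RealInnerProductSpace

section auxGrad

variable {F : Type*} [NormedAddCommGroup F] [InnerProductSpace ℝ F] [CompleteSpace F]

lemma aux_inner_gradient (h : F → ℝ) (x v : F) : ⟪gradient h x, v⟫ = fderiv ℝ h x v :=
  InnerProductSpace.toDual_symm_apply

lemma aux_curve (h : F → ℝ) (hd : Differentiable ℝ h) (x u : F) (t : ℝ) :
    HasDerivAt (fun s : ℝ => h (x + s • u)) ⟪gradient h (x + t • u), u⟫ t := by
  have hc : HasDerivAt (fun s : ℝ => x + s • u) u t := by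
    simpa using ((hasDerivAt_id t).smul_const u).const_add x
  have h2 := (hd (x + t • u)).hasFDerivAt.comp_hasDerivAt t hc
  rw [aux_inner_gradient]
  exact h2

lemma aux_grad_min_zero (h : F → ℝ) (a : F) (hmin : ∀ z, h a ≤ h z) :
    gradient h a = 0 := by
  have hl : IsLocalMin h a := Filter.Eventually.of_forall (fun z => hmin z)
  show (InnerProductSpace.toDual ℝ F).symm (fderiv ℝ h a) = 0
  rw [hl.fderiv_eq_zero]
  simp

lemma aux_convex_lower (h : F → ℝ) (hc : ConvexOn ℝ Set.univ h) (hd : Differentiable ℝ h)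
    (x z : F) : h x + ⟪gradient h x, z - x⟫ ≤ h z := by
  set u := z - x with hu
  have hφ : ConvexOn ℝ Set.univ (fun t : ℝ => h (x + t • u)) := by
    have := hc.comp_affineMap (AffineMap.lineMap x (x + u) : ℝ →ᵃ[ℝ] F)
    simp only [Set.preimage_univ] at this
    refine this.congr (fun t _ => ?_)
    simp [AffineMap.lineMap_apply, add_comm]
  have hder : HasDerivAt (fun t : ℝ => h (x + t • u)) ⟪gradient h x, u⟫ 0 := by
    simpa using aux_curve h hd x u 0
  have := hφ.le_slope_of_hasDerivAt (Set.mem_univ (0:ℝ)) (Set.mem_univ (1:ℝ)) one_pos hder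
  rw [slope_def_field] at this
  simp at this
  have hxu : x + u = z := by rw [hu]; abel
  rw [hxu] at this
  rw [← aux_inner_gradient] at this
  linarith

lemma aux_descent (h : F → ℝ) (hd : Differentiable ℝ h) (L : ℝ)
    (lip : ∀ a b : F, ‖gradient h a - gradient h b‖ ≤ L * ‖a - b‖) (x z : F) :
    h z ≤ h x + ⟪gradient h x, z - x⟫ + L / 2 * ‖z - x‖ ^ 2 := by
  set u := z - x with hu
  set ψ : ℝ → ℝ := fun t => h (x + t • u) - t * ⟪gradient h x, u⟫ - L / 2 * ‖u‖ ^ 2 * t ^ 2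
    with hψ
  have hψder : ∀ t : ℝ, HasDerivAt ψ
      (⟪gradient h (x + t • u), u⟫ - ⟪gradient h x, u⟫ - L * ‖u‖ ^ 2 * t) t := by
    intro t
    have h1 := (aux_curve h hd x u t).sub ((hasDerivAt_id t).mul_const ⟪gradient h x, u⟫)
    have h2 := h1.sub ((hasDerivAt_pow 2 t).const_mul (L / 2 * ‖u‖ ^ 2))
    refine h2.congr_deriv ?_
    ring
  have hdiffψ : Differentiable ℝ ψ := fun t => (hψder t).differentiableAt
  have hnonpos : ∀ t ∈ Set.Ioo (0:ℝ) 1, deriv ψ t ≤ 0 := by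
    intro t ht
    rw [(hψder t).deriv]
    have hib : ⟪gradient h (x + t • u) - gradient h x, u⟫
        ≤ ‖gradient h (x + t • u) - gradient h x‖ * ‖u‖ := real_inner_le_norm _ _
    have hlip := lip (x + t • u) x
    have he : x + t • u - x = t • u := by abel
    rw [he, norm_smul] at hlip
    have ht0 : (0:ℝ) ≤ t := ht.1.le
    rw [Real.norm_eq_abs, abs_of_nonneg ht0] at hlip
    have hnn : (0:ℝ) ≤ ‖u‖ := norm_nonneg u
    have : ‖gradient h (x + t • u) - gradient h x‖ * ‖u‖ ≤ L * (t * ‖u‖) * ‖u‖ :=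
      mul_le_mul_of_nonneg_right hlip hnn
    rw [inner_sub_left] at hib
    nlinarith [hib, this]
  have hanti : AntitoneOn ψ (Set.Icc (0:ℝ) 1) :=
    antitoneOn_of_deriv_nonpos (convex_Icc 0 1) hdiffψ.continuous.continuousOn
      (hdiffψ.differentiableOn) (by intro t ht; rw [interior_Icc] at ht; exact hnonpos t ht)
  have h01 : ψ 1 ≤ ψ 0 := hanti (Set.mem_Icc.mpr ⟨le_refl 0, zero_le_one⟩)
    (Set.mem_Icc.mpr ⟨zero_le_one, le_refl 1⟩) zero_le_one
  have e0 : ψ 0 = h x := by simp [hψ]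
  have e1 : ψ 1 = h z - ⟪gradient h x, u⟫ - L / 2 * ‖u‖ ^ 2 := by
    simp [hψ, hu]
  rw [e0, e1] at h01
  linarith

lemma aux_grad_sq (h : F → ℝ) (hd : Differentiable ℝ h) (L : ℝ) (hL : 0 < L)
    (lip : ∀ a b : F, ‖gradient h a - gradient h b‖ ≤ L * ‖a - b‖)
    (w : F) (hw : ∀ z, h w ≤ h z) (x : F) :
    ‖gradient h x‖ ^ 2 ≤ 2 * L * (h x - h w) := by
  set G := gradient h x with hG
  have hdz := aux_descent h hd L lip x (x - L⁻¹ • G)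
  have he : (x - L⁻¹ • G) - x = -(L⁻¹ • G) := by abel
  rw [he] at hdz
  have e1 : ⟪G, -(L⁻¹ • G)⟫ = -(L⁻¹ * ‖G‖ ^ 2) := by
    rw [inner_neg_right, real_inner_smul_right, real_inner_self_eq_norm_sq]
  have e2 : ‖-(L⁻¹ • G)‖ ^ 2 = (L⁻¹)^2 * ‖G‖ ^ 2 := by
    rw [norm_neg, norm_smul, Real.norm_eq_abs, abs_of_pos (inv_pos.mpr hL)]
    ring
  rw [e1, e2] at hdz
  have hwz := hw (x - L⁻¹ • G)
  have h3 : L⁻¹ * ‖G‖ ^ 2 - L / 2 * ((L⁻¹)^2 * ‖G‖^2) = ‖G‖^2 / (2*L) := by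
    field_simp
    ring
  have h4 : ‖G‖^2 / (2*L) ≤ h x - h w := by linarith
  have h5 := (div_le_iff₀ (by positivity : (0:ℝ) < 2*L)).mp h4
  linarith

lemma aux_grad_avg {N : ℕ} (f : Fin N → F → ℝ) (hdiff : ∀ i, Differentiable ℝ (f i)) (x : F) :
    gradient (fun z => (N : ℝ)⁻¹ * ∑ i, f i z) x = (N : ℝ)⁻¹ • ∑ i, gradient (f i) x := by
  have hF : HasFDerivAt (fun z => ∑ i, f i z) (∑ i, fderiv ℝ (f i) x) x :=
    HasFDerivAt.fun_sum (fun i _ => (hdiff i x).hasFDerivAt)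
  have hF2 : HasFDerivAt (fun z => (N : ℝ)⁻¹ * ∑ i, f i z)
      ((N : ℝ)⁻¹ • ∑ i, fderiv ℝ (f i) x) x := hF.const_mul _
  have hg := hasFDerivAt_iff_hasGradientAt.mp hF2
  rw [hg.gradient, map_smulₛₗ, map_sum]
  simp only [starRingEnd_apply, star_trivial]
  rfl

end auxGrad

lemma aux_sum_eval {V : Type*} [AddCommMonoid V] {N n : ℕ} (j : Fin n) (h : Fin N → V) :
    ∑ s : Fin n → Fin N, h (s j) = N ^ (n - 1) • ∑ i, h i := by
  classical
  rw [← Equiv.sum_comp (Equiv.funSplitAt j (Fin N)).symm (fun s => h (s j))]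
  have hv : ∀ p : Fin N × ({ k // k ≠ j } → Fin N),
      ((Equiv.funSplitAt j (Fin N)).symm p) j = p.1 := by
    intro p; simp
  rw [Fintype.sum_congr _ _ (fun p => by rw [hv p])]
  rw [Fintype.sum_prod_type]
  simp only [Finset.sum_const]
  rw [← Finset.sum_nsmul]
  congr 1
  simp [Fintype.card_fun, Fintype.card_subtype_compl, Fintype.card_subtype_eq]


lemma aux_onestep {F : Type*} [NormedAddCommGroup F] [InnerProductSpace ℝ F]
    (L Γ γmin : ℝ) (hL : 0 < L) (hΓ : 0 < Γ) (hγmin : 0 < γmin)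
    (x xstar G : F) (γ' A C Bv P : ℝ)
    (hA : A = ⟪G, x - xstar⟫)
    (hγ0 : 0 ≤ γ') (hγΓ : γ' ≤ Γ) (hγm : x ≠ xstar → γmin ≤ γ')
    (hγP : γ' * ‖G‖^2 ≤ P) (hP2 : P ≤ 2*L*(C+Bv)) (hCA : C ≤ A) (hCB : -Bv ≤ C)
    (hB0 : 0 ≤ Bv) :
    ‖(x - ((2*L)⁻¹*γ') • G) - xstar‖^2
      ≤ ‖x - xstar‖^2 - (2*L)⁻¹*γmin*A + (2*L)⁻¹*(2*Γ)*Bv := by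
  set η : ℝ := (2*L)⁻¹ with hη
  have hη0 : 0 ≤ η := by rw [hη]; positivity
  have hη2L : η * (2*L) = 1 := inv_mul_cancel₀ (by positivity)
  have hexp : ‖(x - (η*γ') • G) - xstar‖^2
      = ‖x - xstar‖^2 - 2*(η*γ')*A + (η*γ')^2*‖G‖^2 := by
    rw [sub_right_comm, @norm_sub_sq_real, real_inner_smul_right, norm_smul, hA,
      real_inner_comm, Real.norm_eq_abs, mul_pow, sq_abs]
    ring
  have hγA : γmin * A - Γ * Bv ≤ γ' * A := by
    by_cases hx : x = xstar
    · have hA0 : A = 0 := by rw [hA, hx, sub_self, inner_zero_right]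
      rw [hA0]
      have : 0 ≤ Γ * Bv := mul_nonneg hΓ.le hB0
      nlinarith
    · have hγm' := hγm hx
      rcases le_or_gt 0 A with hA0|hA0
      · have k1 : γmin * A ≤ γ' * A := mul_le_mul_of_nonneg_right hγm' hA0
        have k2 : 0 ≤ Γ * Bv := mul_nonneg hΓ.le hB0
        linarith
      · have hABv : -Bv ≤ A := le_trans hCB hCA
        have k1 : (γ' - γmin) * (-Bv) ≤ (γ' - γmin) * A :=
          mul_le_mul_of_nonneg_left hABv (by linarith)
        have k2 : (γ' - γmin) * Bv ≤ Γ * Bv :=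
          mul_le_mul_of_nonneg_right (by linarith) hB0
        nlinarith [k1, k2]
  have q0 : γ' * (γ' * ‖G‖^2) ≤ γ' * (2*L*(C+Bv)) :=
    mul_le_mul_of_nonneg_left (le_trans hγP hP2) hγ0
  have q1 : (η*γ')^2 * ‖G‖^2 ≤ η*γ'*(C+Bv) := by
    calc (η*γ')^2*‖G‖^2 = η^2 * (γ'*(γ'*‖G‖^2)) := by ring
      _ ≤ η^2 * (γ'*(2*L*(C+Bv))) := mul_le_mul_of_nonneg_left q0 (sq_nonneg η)
      _ = (η*(2*L)) * (η*γ'*(C+Bv)) := by ring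
      _ = η*γ'*(C+Bv) := by rw [hη2L, one_mul]
  have q2 : η*γ'*C ≤ η*γ'*A := mul_le_mul_of_nonneg_left hCA (mul_nonneg hη0 hγ0)
  have q3 : η*(γ'*Bv) ≤ η*(Γ*Bv) :=
    mul_le_mul_of_nonneg_left (mul_le_mul_of_nonneg_right hγΓ hB0) hη0
  have q4 : η*(γmin*A - Γ*Bv) ≤ η*(γ'*A) := mul_le_mul_of_nonneg_left hγA hη0
  rw [hexp]
  nlinarith [q1, q2, q3, q4]

/-- Theorem 4 (GraD with a constant cap): linear convergence to a neighbourhood. -/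
theorem grad_K_step
    (d N n K : ℕ) (hN : 1 ≤ N) (hn : 1 ≤ n)
    (f : Fin N → EuclideanSpace ℝ (Fin d) → ℝ)
    (hdiff : ∀ i, Differentiable ℝ (f i))
    (hconv : ∀ i, ConvexOn ℝ Set.univ (f i))
    (L : ℝ) (hL : 0 < L)
    (hsmooth : ∀ i (x y : EuclideanSpace ℝ (Fin d)),
      ‖gradient (f i) x - gradient (f i) y‖ ≤ L * ‖x - y‖)
    (μ : ℝ) (hμ : 0 < μ)
    (xstar : EuclideanSpace ℝ (Fin d))
    (hsc : ∀ x y : EuclideanSpace ℝ (Fin d),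
      (N : ℝ)⁻¹ * ∑ i, f i x
        + ⟪gradient (fun z => (N : ℝ)⁻¹ * ∑ i, f i z) x, y - x⟫
        + μ / 2 * ‖y - x‖ ^ 2 ≤ (N : ℝ)⁻¹ * ∑ i, f i y)
    (hmin : ∀ y, (N : ℝ)⁻¹ * ∑ i, f i xstar ≤ (N : ℝ)⁻¹ * ∑ i, f i y)
    (y : Fin N → EuclideanSpace ℝ (Fin d))
    (hy : ∀ i (z : EuclideanSpace ℝ (Fin d)), f i (y i) ≤ f i z)
    (D : ℝ) (hD : D = (N : ℝ)⁻¹ * ∑ i, ‖y i - xstar‖ ^ 2)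
    (Γ : ℝ) (hΓ : 0 < Γ)
    (g : (Fin n → Fin N) → EuclideanSpace ℝ (Fin d) → EuclideanSpace ℝ (Fin d))
    (hg : ∀ s x, g s x = (n : ℝ)⁻¹ • ∑ j, gradient (f (s j)) x)
    (γ : (Fin n → Fin N) → EuclideanSpace ℝ (Fin d) → ℝ)
    (hγ : ∀ s x, γ s x
      = min Γ (((n : ℝ)⁻¹ * ∑ j, ‖gradient (f (s j)) x‖ ^ 2) / ‖g s x‖ ^ 2))
    (hgne : ∀ x, x ≠ xstar → ∀ s, g s x ≠ 0)
    (γmin : ℝ) (hγmin : 0 < γmin) (hμγ : μ * γmin ≤ 2 * L)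
    (hlb : ∀ x, x ≠ xstar → ∀ s, γmin ≤ γ s x)
    (x0 : EuclideanSpace ℝ (Fin d))
    (X : (Fin K → Fin n → Fin N) → ℕ → EuclideanSpace ℝ (Fin d))
    (hX0 : ∀ S, X S 0 = x0)
    (hXstep : ∀ S (k : Fin K),
      X S (k.val + 1)
        = X S k.val - ((2 * L)⁻¹ * γ (S k) (X S k.val)) • g (S k) (X S k.val)) :
    (((N : ℝ) ^ n) ^ K)⁻¹ * ∑ S : Fin K → Fin n → Fin N, ‖X S K - xstar‖ ^ 2
      ≤ (1 - μ * γmin / (2 * L)) ^ K * ‖x0 - xstar‖ ^ 2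
        + 8 * L * Γ * D / (μ * γmin) := by
  classical
  have hN0 : (0:ℝ) < N := by exact_mod_cast Nat.lt_of_lt_of_le Nat.zero_lt_one hN
  have hn0 : (0:ℝ) < n := by exact_mod_cast Nat.lt_of_lt_of_le Nat.zero_lt_one hn
  set F0 : EuclideanSpace ℝ (Fin d) → ℝ := fun z => (N : ℝ)⁻¹ * ∑ i, f i z with hF0
  have hdF0 : Differentiable ℝ F0 := by
    apply Differentiable.const_mul
    exact Differentiable.fun_sum (fun i _ => hdiff i)
  have hgradF0 : ∀ x, gradient F0 x = (N : ℝ)⁻¹ • ∑ i, gradient (f i) x :=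
    aux_grad_avg f hdiff
  have hgradstar : gradient F0 xstar = 0 := aux_grad_min_zero F0 xstar hmin
  -- strong convexity consequence
  have hscmain : ∀ x : EuclideanSpace ℝ (Fin d), μ * ‖x - xstar‖^2 ≤ ⟪gradient F0 x, x - xstar⟫ := by
    intro x
    have h1 := hsc x xstar
    have h2 := hsc xstar x
    rw [hgradstar] at h2
    simp only [inner_zero_left] at h2
    have hns : ‖xstar - x‖ = ‖x - xstar‖ := norm_sub_rev _ _
    rw [hns] at h1
    have hir : ⟪gradient F0 x, xstar - x⟫ = -⟪gradient F0 x, x - xstar⟫ := by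
      rw [show xstar - x = -(x - xstar) from (neg_sub _ _).symm, inner_neg_right]
    rw [hir] at h1
    linarith
  -- per-summand facts
  set b : Fin N → ℝ := fun i => f i xstar - f i (y i) with hb
  have hb0 : ∀ i, 0 ≤ b i := fun i => sub_nonneg.mpr (hy i xstar)
  have hgradyi : ∀ i, gradient (f i) (y i) = 0 :=
    fun i => aux_grad_min_zero (f i) (y i) (hy i)
  have hbD : ∀ i, b i ≤ L/2 * ‖y i - xstar‖^2 := by
    intro i
    have := aux_descent (f i) (hdiff i) L (hsmooth i) (y i) xstar
    rw [hgradyi i] at this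
    simp only [inner_zero_left] at this
    rw [norm_sub_rev] at this
    simp only [hb]
    linarith
  have hD0 : 0 ≤ D := by
    rw [hD]; positivity
  have hgsq : ∀ i (x : EuclideanSpace ℝ (Fin d)), ‖gradient (f i) x‖^2 ≤ 2*L*((f i x - f i xstar) + b i) := by
    intro i x
    have := aux_grad_sq (f i) (hdiff i) L hL (hsmooth i) (y i) (hy i) x
    simp only [hb]
    linarith
  have hconvi : ∀ i (x : EuclideanSpace ℝ (Fin d)), f i x - f i xstar ≤ ⟪gradient (f i) x, x - xstar⟫ := by
    intro i x
    have := aux_convex_lower (f i) (hconv i) (hdiff i) x xstar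
    have hir : ⟪gradient (f i) x, xstar - x⟫ = -⟪gradient (f i) x, x - xstar⟫ := by
      rw [show xstar - x = -(x - xstar) from (neg_sub _ _).symm, inner_neg_right]
    rw [hir] at this
    linarith
  have hlowi : ∀ i (x : EuclideanSpace ℝ (Fin d)), -(b i) ≤ f i x - f i xstar := by
    intro i x
    have := hy i x
    simp only [hb]
    linarith
  set ρ : ℝ := 1 - μ * γmin / (2*L) with hρ
  set c0 : ℝ := Γ * D / 2 with hc0
  set M : ℝ := (N:ℝ)^n with hM
  have hM0 : 0 < M := by positivity
  have hρ0 : 0 ≤ ρ := by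
    rw [hρ]
    have : μ * γmin / (2*L) ≤ 1 := (div_le_one (by positivity)).mpr hμγ
    linarith
  have hρ1 : ρ < 1 := by
    rw [hρ]
    have : 0 < μ * γmin / (2*L) := by positivity
    linarith
  -- pointwise one-step bound
  have point : ∀ (s : Fin n → Fin N) (x : EuclideanSpace ℝ (Fin d)),
      ‖(x - ((2*L)⁻¹ * γ s x) • g s x) - xstar‖^2
        ≤ ‖x - xstar‖^2 - (2*L)⁻¹ * γmin * ⟪g s x, x - xstar⟫
          + (2*L)⁻¹ * (2*Γ) * ((n:ℝ)⁻¹ * ∑ j, b (s j)) := by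
    intro s x
    have hP0 : (0:ℝ) ≤ (n:ℝ)⁻¹ * ∑ j, ‖gradient (f (s j)) x‖^2 := by positivity
    have hγ0 : 0 ≤ γ s x := by
      rw [hγ s x]
      exact le_min hΓ.le (div_nonneg hP0 (by positivity))
    have hγΓ : γ s x ≤ Γ := by rw [hγ s x]; exact min_le_left _ _
    have hγm : x ≠ xstar → γmin ≤ γ s x := fun hx => hlb x hx s
    have hγP : γ s x * ‖g s x‖^2 ≤ (n:ℝ)⁻¹ * ∑ j, ‖gradient (f (s j)) x‖^2 := by
      by_cases hG0 : g s x = 0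
      · rw [hG0]; simpa using hP0
      · have hGpos : 0 < ‖g s x‖^2 := by
          have := norm_pos_iff.mpr hG0
          positivity
        have h1 : γ s x ≤ ((n:ℝ)⁻¹ * ∑ j, ‖gradient (f (s j)) x‖^2) / ‖g s x‖^2 := by
          rw [hγ s x]; exact min_le_right _ _
        calc γ s x * ‖g s x‖^2
            ≤ (((n:ℝ)⁻¹ * ∑ j, ‖gradient (f (s j)) x‖^2) / ‖g s x‖^2) * ‖g s x‖^2 :=
              mul_le_mul_of_nonneg_right h1 hGpos.le
          _ = (n:ℝ)⁻¹ * ∑ j, ‖gradient (f (s j)) x‖^2 :=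
              div_mul_cancel₀ _ (ne_of_gt hGpos)
    have hP2 : (n:ℝ)⁻¹ * ∑ j, ‖gradient (f (s j)) x‖^2
        ≤ 2*L*(((n:ℝ)⁻¹ * ∑ j, (f (s j) x - f (s j) xstar)) + (n:ℝ)⁻¹ * ∑ j, b (s j)) := by
      have hsum : ∑ j, ‖gradient (f (s j)) x‖^2
          ≤ ∑ j, 2*L*((f (s j) x - f (s j) xstar) + b (s j)) :=
        Finset.sum_le_sum fun j _ => hgsq (s j) x
      have e3 : ∑ j, 2*L*((f (s j) x - f (s j) xstar) + b (s j))
          = 2*L*((∑ j, (f (s j) x - f (s j) xstar)) + ∑ j, b (s j)) := by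
        rw [← Finset.mul_sum, Finset.sum_add_distrib]
      have h4 := mul_le_mul_of_nonneg_left hsum (by positivity : (0:ℝ) ≤ (n:ℝ)⁻¹)
      rw [e3] at h4
      calc (n:ℝ)⁻¹ * ∑ j, ‖gradient (f (s j)) x‖^2
          ≤ (n:ℝ)⁻¹ * (2*L*((∑ j, (f (s j) x - f (s j) xstar)) + ∑ j, b (s j))) := h4
        _ = 2*L*(((n:ℝ)⁻¹ * ∑ j, (f (s j) x - f (s j) xstar)) + (n:ℝ)⁻¹ * ∑ j, b (s j)) := by
            ring
    have hCA : (n:ℝ)⁻¹ * ∑ j, (f (s j) x - f (s j) xstar) ≤ ⟪g s x, x - xstar⟫ := by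
      rw [hg s x, real_inner_smul_left, sum_inner]
      exact mul_le_mul_of_nonneg_left
        (Finset.sum_le_sum fun j _ => hconvi (s j) x) (by positivity)
    have hCB : -((n:ℝ)⁻¹ * ∑ j, b (s j)) ≤ (n:ℝ)⁻¹ * ∑ j, (f (s j) x - f (s j) xstar) := by
      have h1 : -(∑ j, b (s j)) ≤ ∑ j, (f (s j) x - f (s j) xstar) := by
        rw [← Finset.sum_neg_distrib]
        exact Finset.sum_le_sum fun j _ => hlowi (s j) x
      have h2 := mul_le_mul_of_nonneg_left h1 (by positivity : (0:ℝ) ≤ (n:ℝ)⁻¹)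
      rw [mul_neg] at h2
      linarith
    have hB0 : (0:ℝ) ≤ (n:ℝ)⁻¹ * ∑ j, b (s j) := by
      have : (0:ℝ) ≤ ∑ j, b (s j) := Finset.sum_nonneg fun j _ => hb0 (s j)
      positivity
    exact aux_onestep L Γ γmin hL hΓ hγmin x xstar (g s x) (γ s x)
      ⟪g s x, x - xstar⟫ ((n:ℝ)⁻¹ * ∑ j, (f (s j) x - f (s j) xstar))
      ((n:ℝ)⁻¹ * ∑ j, b (s j)) ((n:ℝ)⁻¹ * ∑ j, ‖gradient (f (s j)) x‖^2)
      rfl hγ0 hγΓ hγm hγP hP2 hCA hCB hB0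

  -- expected one-step bound
  have key : ∀ x : EuclideanSpace ℝ (Fin d),
      ∑ s : Fin n → Fin N, ‖(x - ((2*L)⁻¹ * γ s x) • g s x) - xstar‖^2
        ≤ M * (ρ * ‖x - xstar‖^2 + c0) := by
    intro x
    have hpow : (N:ℝ)^(n-1) * (N:ℝ) = (N:ℝ)^n := by
      rw [← pow_succ]
      congr 1
      omega
    -- sum of the minibatch gradients
    have hsumg : ∑ s : Fin n → Fin N, g s x = (N:ℝ)^(n-1) • ∑ i, gradient (f i) x := by
      have e1 : ∑ s : Fin n → Fin N, g s x
          = (n:ℝ)⁻¹ • ∑ s : Fin n → Fin N, ∑ j, gradient (f (s j)) x := by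
        rw [Finset.smul_sum]
        exact Finset.sum_congr rfl fun s _ => hg s x
      rw [e1, Finset.sum_comm]
      have e2 : ∀ j : Fin n, ∑ s : Fin n → Fin N, gradient (f (s j)) x
          = N^(n-1) • ∑ i, gradient (f i) x := fun j =>
        aux_sum_eval j (fun i => gradient (f i) x)
      rw [Finset.sum_congr rfl (fun j _ => e2 j), Finset.sum_const]
      simp only [Finset.card_univ, Fintype.card_fin]
      rw [← Nat.cast_smul_eq_nsmul ℝ (N^(n-1)), ← Nat.cast_smul_eq_nsmul ℝ n,
        smul_smul, smul_smul]
      congr 1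
      push_cast
      rw [inv_mul_cancel₀ (ne_of_gt hn0), one_mul]
    have hVw : ⟪∑ i, gradient (f i) x, x - xstar⟫ = (N:ℝ) * ⟪gradient F0 x, x - xstar⟫ := by
      rw [hgradF0 x, real_inner_smul_left]
      field_simp
    have hAsum : (N:ℝ)^n * (μ * ‖x - xstar‖^2) ≤ ∑ s : Fin n → Fin N, ⟪g s x, x - xstar⟫ := by
      rw [← sum_inner, hsumg, real_inner_smul_left, hVw]
      have h1 := hscmain x
      calc (N:ℝ)^n * (μ * ‖x - xstar‖^2) = (N:ℝ)^(n-1) * ((N:ℝ) * (μ * ‖x - xstar‖^2)) := by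
            rw [← hpow]; ring
        _ ≤ (N:ℝ)^(n-1) * ((N:ℝ) * ⟪gradient F0 x, x - xstar⟫) := by
            apply mul_le_mul_of_nonneg_left _ (by positivity)
            exact mul_le_mul_of_nonneg_left h1 hN0.le
    have hBsum : ∑ s : Fin n → Fin N, ((n:ℝ)⁻¹ * ∑ j, b (s j)) ≤ (N:ℝ)^n * (L/2 * D) := by
      have e1 : ∑ s : Fin n → Fin N, ((n:ℝ)⁻¹ * ∑ j, b (s j))
          = (n:ℝ)⁻¹ * ∑ s : Fin n → Fin N, ∑ j, b (s j) := by rw [Finset.mul_sum]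
      have e2 : ∀ j : Fin n, ∑ s : Fin n → Fin N, b (s j) = N^(n-1) • ∑ i, b i :=
        fun j => aux_sum_eval j b
      rw [e1, Finset.sum_comm, Finset.sum_congr rfl (fun j _ => e2 j), Finset.sum_const]
      simp only [Finset.card_univ, Fintype.card_fin, smul_eq_mul, nsmul_eq_mul]
      have hSY : ∑ i, ‖y i - xstar‖^2 = (N:ℝ) * D := by
        rw [hD]
        field_simp
      have hSB : ∑ i, b i ≤ L/2 * ((N:ℝ) * D) := by
        rw [← hSY, Finset.mul_sum]
        exact Finset.sum_le_sum fun i _ => hbD i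
      push_cast
      rw [inv_mul_cancel_left₀ (ne_of_gt hn0), ← hpow]
      calc (N:ℝ)^(n-1) * ∑ i, b i ≤ (N:ℝ)^(n-1) * (L/2 * ((N:ℝ) * D)) :=
            mul_le_mul_of_nonneg_left hSB (by positivity)
        _ = (N:ℝ)^(n-1) * (N:ℝ) * (L/2 * D) := by ring
    have hsum := Finset.sum_le_sum (fun s (_ : s ∈ (Finset.univ : Finset (Fin n → Fin N))) =>
      point s x)
    rw [Finset.sum_add_distrib, Finset.sum_sub_distrib, Finset.sum_const] at hsum
    simp only [Finset.card_univ, Fintype.card_fun, Fintype.card_fin, nsmul_eq_mul] at hsum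
    push_cast at hsum
    rw [← Finset.mul_sum, ← Finset.mul_sum] at hsum
    have t2 : (2*L)⁻¹ * γmin * ((N:ℝ)^n * (μ * ‖x - xstar‖^2))
        ≤ (2*L)⁻¹ * γmin * ∑ s : Fin n → Fin N, ⟪g s x, x - xstar⟫ :=
      mul_le_mul_of_nonneg_left hAsum (by positivity)
    have t3 : (2*L)⁻¹ * (2*Γ) * ∑ s : Fin n → Fin N, ((n:ℝ)⁻¹ * ∑ j, b (s j))
        ≤ (2*L)⁻¹ * (2*Γ) * ((N:ℝ)^n * (L/2 * D)) :=
      mul_le_mul_of_nonneg_left hBsum (by positivity)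
    have e4 : (N:ℝ)^n * ‖x - xstar‖^2 - (2*L)⁻¹ * γmin * ((N:ℝ)^n * (μ * ‖x - xstar‖^2))
        + (2*L)⁻¹ * (2*Γ) * ((N:ℝ)^n * (L/2 * D)) = M * (ρ * ‖x - xstar‖^2 + c0) := by
      rw [hM, hρ, hc0]
      field_simp
    rw [← e4]
    linarith [hsum, t2, t3]

  -- trajectories depend only on past minibatches
  have Xdep : ∀ (m : ℕ), m ≤ K → ∀ S S' : Fin K → Fin n → Fin N,
      (∀ i : Fin K, (i:ℕ) < m → S i = S' i) → X S m = X S' m := by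
    intro m
    induction m with
    | zero => intro _ S S' _; rw [hX0, hX0]
    | succ m ih =>
      intro hm S S' hag
      have hmK : m < K := Nat.lt_of_lt_of_le (Nat.lt_succ_self m) hm
      have e1 := hXstep S ⟨m, hmK⟩
      have e2 := hXstep S' ⟨m, hmK⟩
      have hx : X S m = X S' m := ih (Nat.le_of_lt hmK) S S'
        (fun i hi => hag i (Nat.lt_succ_of_lt hi))
      have hs : S ⟨m, hmK⟩ = S' ⟨m, hmK⟩ := hag ⟨m, hmK⟩ (Nat.lt_succ_self m)
      rw [e1, e2, hx, hs]
  -- main recursion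
  set Φ : ℕ → ℝ := fun m => ∑ S : Fin K → Fin n → Fin N, ‖X S m - xstar‖^2 with hΦ
  have hΦstep : ∀ m, m < K → Φ (m+1) ≤ ρ * Φ m + M^K * c0 := by
    intro m hm
    set k : Fin K := ⟨m, hm⟩ with hk
    set e := (Equiv.funSplitAt k (Fin n → Fin N)).symm with he
    set s0 : Fin n → Fin N := fun _ => ⟨0, Nat.lt_of_lt_of_le Nat.zero_lt_one hN⟩ with hs0
    set xr : ({ j : Fin K // j ≠ k } → Fin n → Fin N) → EuclideanSpace ℝ (Fin d) :=
      fun r => X (e (s0, r)) m with hxr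
    have hXr : ∀ (s : Fin n → Fin N) r, X (e (s, r)) m = xr r := by
      intro s r
      apply Xdep m (le_of_lt hm)
      intro i hi
      have hik : i ≠ k := by
        intro hik
        rw [hik] at hi
        exact absurd hi (lt_irrefl m)
      simp [he, Equiv.funSplitAt_symm_apply, hik]
    have hSk : ∀ (s : Fin n → Fin N) r, (e (s, r)) k = s := by
      intro s r
      simp [he]
    have hstep : ∀ (s : Fin n → Fin N) r,
        X (e (s, r)) (m+1) = xr r - ((2*L)⁻¹ * γ s (xr r)) • g s (xr r) := by
      intro s r
      have h1 : X (e (s, r)) (m+1)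
          = X (e (s, r)) m - ((2*L)⁻¹ * γ ((e (s, r)) k) (X (e (s, r)) m))
            • g ((e (s, r)) k) (X (e (s, r)) m) := hXstep (e (s, r)) k
      rw [hSk s r, hXr s r] at h1
      exact h1
    have hsplit : ∀ (W : (Fin K → Fin n → Fin N) → ℝ),
        ∑ S, W S = ∑ r, ∑ s : Fin n → Fin N, W (e (s, r)) := by
      intro W
      rw [← Equiv.sum_comp e W, Fintype.sum_prod_type]
      exact Finset.sum_comm
    have h1 : Φ (m+1) = ∑ r, ∑ s : Fin n → Fin N,
        ‖(xr r - ((2*L)⁻¹ * γ s (xr r)) • g s (xr r)) - xstar‖^2 := by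
      simp only [hΦ]
      rw [hsplit]
      exact Finset.sum_congr rfl fun r _ => Finset.sum_congr rfl fun s _ => by
        rw [hstep s r]
    have h2 : Φ m = ∑ r, M * ‖xr r - xstar‖^2 := by
      simp only [hΦ]
      rw [hsplit]
      refine Finset.sum_congr rfl fun r _ => ?_
      rw [Finset.sum_congr rfl (fun s (_ : s ∈ Finset.univ) => by rw [hXr s r]),
        Finset.sum_const]
      simp only [Finset.card_univ, Fintype.card_fun, Fintype.card_fin, nsmul_eq_mul, hM]
      push_cast
      ring
    have hcardr : ((Fintype.card ({ j : Fin K // j ≠ k } → Fin n → Fin N)) : ℝ)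
        = M^(K-1) := by
      rw [Fintype.card_fun]
      have hcs : Fintype.card { j : Fin K // j ≠ k } = K - 1 := by
        rw [Fintype.card_subtype_compl, Fintype.card_subtype_eq, Fintype.card_fin]
      rw [hcs, Fintype.card_fun, Fintype.card_fin, hM]
      push_cast
      rw [Fintype.card_fin]
    rw [h1, h2]
    calc ∑ r, ∑ s : Fin n → Fin N,
          ‖(xr r - ((2*L)⁻¹ * γ s (xr r)) • g s (xr r)) - xstar‖^2
        ≤ ∑ r, M * (ρ * ‖xr r - xstar‖^2 + c0) :=
          Finset.sum_le_sum fun r _ => key (xr r)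
      _ = ρ * ∑ r, M * ‖xr r - xstar‖^2
          + ((Fintype.card ({ j : Fin K // j ≠ k } → Fin n → Fin N)) : ℝ) * (M * c0) := by
          simp only [mul_add]
          rw [Finset.sum_add_distrib, Finset.sum_const, nsmul_eq_mul, Finset.mul_sum]
          congr 1
          exact Finset.sum_congr rfl fun r _ => by ring
      _ = ρ * ∑ r, M * ‖xr r - xstar‖^2 + M^K * c0 := by
          rw [hcardr]
          congr 1
          rw [← mul_assoc, ← pow_succ]
          congr 2
          omega

  have hΦbound : ∀ m, m ≤ K →
      Φ m ≤ M^K * (ρ^m * ‖x0 - xstar‖^2 + c0 * ∑ i ∈ Finset.range m, ρ^i) := by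
    intro m
    induction m with
    | zero =>
      intro _
      have : Φ 0 = M^K * ‖x0 - xstar‖^2 := by
        simp only [hΦ]
        rw [Finset.sum_congr rfl (fun S (_ : S ∈ Finset.univ) => by rw [hX0 S]),
          Finset.sum_const]
        simp only [Finset.card_univ, Fintype.card_fun, Fintype.card_fin, nsmul_eq_mul, hM]
        push_cast
        ring
      rw [this]
      simp only [pow_zero, one_mul, Finset.range_zero, Finset.sum_empty, mul_zero, add_zero,
        le_refl]
    | succ m ih =>
      intro hm
      have hmK : m < K := Nat.lt_of_lt_of_le (Nat.lt_succ_self m) hm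
      have h1 := hΦstep m hmK
      have h2 := ih (le_of_lt hmK)
      have h3 : ρ * Φ m ≤ ρ * (M^K * (ρ^m * ‖x0 - xstar‖^2 + c0 * ∑ i ∈ Finset.range m, ρ^i)) :=
        mul_le_mul_of_nonneg_left h2 hρ0
      have h4 : ρ * (M^K * (ρ^m * ‖x0 - xstar‖^2 + c0 * ∑ i ∈ Finset.range m, ρ^i)) + M^K * c0
          = M^K * (ρ^(m+1) * ‖x0 - xstar‖^2 + c0 * ∑ i ∈ Finset.range (m+1), ρ^i) := by
        have hgs : ∑ i ∈ Finset.range (m+1), ρ^i = ρ * ∑ i ∈ Finset.range m, ρ^i + 1 :=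
          geom_sum_succ
        rw [hgs]
        ring
      linarith

  -- conclusion
  have hfin := hΦbound K le_rfl
  have h1ρ : 0 < 1 - ρ := by linarith
  have hSK : ∑ i ∈ Finset.range K, ρ^i ≤ (1-ρ)⁻¹ := by
    have hgs := geom_sum_mul ρ K
    have hpK : 0 ≤ ρ^K := pow_nonneg hρ0 K
    have h2 : (∑ i ∈ Finset.range K, ρ^i) * (1-ρ) ≤ 1 := by nlinarith [hgs]
    rw [inv_eq_one_div, le_div_iff₀ h1ρ]
    exact h2
  have hc00 : 0 ≤ c0 := by rw [hc0]; positivity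
  have hcρ : c0 * (1-ρ)⁻¹ = L*Γ*D/(μ*γmin) := by
    rw [hc0, hρ]
    have hμγ0 : μ * γmin ≠ 0 := by positivity
    field_simp
    ring
  have hM0K : (0:ℝ) < M^K := pow_pos hM0 K
  have hgoal : (M^K)⁻¹ * Φ K ≤ ρ^K * ‖x0 - xstar‖^2 + c0 * (1-ρ)⁻¹ := by
    have h5 : (M^K)⁻¹ * Φ K ≤ (M^K)⁻¹ * (M^K * (ρ^K * ‖x0 - xstar‖^2
        + c0 * ∑ i ∈ Finset.range K, ρ^i)) :=
      mul_le_mul_of_nonneg_left hfin (by positivity)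
    rw [inv_mul_cancel_left₀ (ne_of_gt hM0K)] at h5
    have h6 : c0 * ∑ i ∈ Finset.range K, ρ^i ≤ c0 * (1-ρ)⁻¹ :=
      mul_le_mul_of_nonneg_left hSK hc00
    linarith
  rw [hcρ] at hgoal
  have h7 : L*Γ*D/(μ*γmin) ≤ 8*L*Γ*D/(μ*γmin) := by
    have h8 : 0 ≤ L*Γ*D/(μ*γmin) := by positivity
    rw [div_le_div_iff₀ (by positivity) (by positivity)]
    nlinarith [mul_nonneg (mul_nonneg hL.le hΓ.le) hD0, mul_pos hμ hγmin]
  calc (M^K)⁻¹ * Φ K ≤ ρ^K * ‖x0 - xstar‖^2 + L*Γ*D/(μ*γmin) := hgoal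
    _ ≤ ρ^K * ‖x0 - xstar‖^2 + 8*L*Γ*D/(μ*γmin) := by linarith
end

section
/- (Comparison of uncapped StoP and GraD step sizes.) Assume each f_i is L-smooth (L > 0) and attains its infimum, with ℓ_i = inf f_i. Then for every x ∈ E and every minibatch s with ḡ_s(x) ≠ 0, the uncapped StoP step size dominates 1/L times the plain gradient diversity: 2·(1/n)·∑_j (f_{s(j)}(x) − ℓ_{s(j)}) / ‖ḡ_s(x)‖² ≥ (1/L)·[(1/n)·∑_j ‖∇f_{s(j)}(x)‖²] / ‖ḡ_s(x)‖² ≥ 1/L. -/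
open scoped BigOperators RealInnerProductSpace

/-- Descent lemma: differentiable with L-Lipschitz gradient. -/
lemma descent_lemma {d : ℕ} (f : EuclideanSpace ℝ (Fin d) → ℝ)
    (hdiff : Differentiable ℝ f) (L : ℝ) (hL : 0 < L)
    (hsmooth : ∀ x y, ‖gradient f x - gradient f y‖ ≤ L * ‖x - y‖)
    (a b : EuclideanSpace ℝ (Fin d)) :
    f b ≤ f a + ⟪gradient f a, b - a⟫ + L / 2 * ‖b - a‖ ^ 2 := by
  set v := b - a with hv
  set g : ℝ → ℝ := fun t => f (a + t • v) - t * ⟪gradient f a, v⟫ - L / 2 * t ^ 2 * ‖v‖ ^ 2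
    with hg
  have hline : ∀ t : ℝ, HasDerivAt (fun t : ℝ => a + t • v) v t := fun t =>
    by simpa using ((hasDerivAt_id t).smul_const v).const_add a
  have hgd : ∀ t : ℝ, HasDerivAt g
      (⟪gradient f (a + t • v), v⟫ - ⟪gradient f a, v⟫ - L * t * ‖v‖ ^ 2) t := by
    intro t
    have h1 : HasDerivAt (fun t : ℝ => f (a + t • v)) (⟪gradient f (a + t • v), v⟫) t := by
      have := ((hdiff (a + t • v)).hasGradientAt.hasFDerivAt).comp_hasDerivAt t (hline t)
      simpa [InnerProductSpace.toDual_apply_apply, Function.comp_def] using this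
    have h2 : HasDerivAt (fun t : ℝ => t * ⟪gradient f a, v⟫) (⟪gradient f a, v⟫) t :=
      by simpa using (hasDerivAt_id t).mul_const (⟪gradient f a, v⟫)
    have h3 : HasDerivAt (fun t : ℝ => L / 2 * t ^ 2 * ‖v‖ ^ 2) (L * t * ‖v‖ ^ 2) t := by
      have := (((hasDerivAt_pow 2 t).const_mul (L / 2)).mul_const (‖v‖ ^ 2))
      exact this.congr_deriv (by ring)
    exact (h1.sub h2).sub h3
  have hmono : AntitoneOn g (Set.Icc 0 1) := by
    apply antitoneOn_of_deriv_nonpos (convex_Icc 0 1)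
    · exact fun t ht => ((hgd t).continuousAt).continuousWithinAt
    · intro t ht
      exact (hgd t).differentiableAt.differentiableWithinAt
    · intro t ht
      rw [interior_Icc] at ht
      rw [(hgd t).deriv]
      have hcs : ⟪gradient f (a + t • v) - gradient f a, v⟫ ≤ L * t * ‖v‖ ^ 2 := by
        calc ⟪gradient f (a + t • v) - gradient f a, v⟫
            ≤ ‖gradient f (a + t • v) - gradient f a‖ * ‖v‖ := real_inner_le_norm _ _
          _ ≤ (L * ‖(a + t • v) - a‖) * ‖v‖ := by
              apply mul_le_mul_of_nonneg_right (hsmooth _ _) (norm_nonneg _)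
          _ = L * t * ‖v‖ ^ 2 := by
              rw [add_sub_cancel_left, norm_smul]
              simp [abs_of_nonneg ht.1.le]
              ring
      rw [inner_sub_left] at hcs
      linarith
  have h01 : g 1 ≤ g 0 := hmono (by norm_num) (by norm_num) zero_le_one
  simp only [hg, one_smul, zero_smul, add_zero, one_pow, one_mul, zero_mul, sub_zero,
    zero_pow, mul_zero] at h01
  have : a + v = b := by simp [hv]
  rw [this] at h01
  linarith

lemma grad_sq_le {d : ℕ} (f : EuclideanSpace ℝ (Fin d) → ℝ)
    (hdiff : Differentiable ℝ f) (L : ℝ) (hL : 0 < L)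
    (hsmooth : ∀ x y, ‖gradient f x - gradient f y‖ ≤ L * ‖x - y‖)
    (y : EuclideanSpace ℝ (Fin d)) (hy : ∀ z, f y ≤ f z)
    (x : EuclideanSpace ℝ (Fin d)) :
    ‖gradient f x‖ ^ 2 ≤ 2 * L * (f x - f y) := by
  have h := descent_lemma f hdiff L hL hsmooth x (x - L⁻¹ • gradient f x)
  have hb : (x - L⁻¹ • gradient f x) - x = -(L⁻¹ • gradient f x) := by abel
  rw [hb] at h
  have hinner : ⟪gradient f x, -(L⁻¹ • gradient f x)⟫ = -(L⁻¹ * ‖gradient f x‖ ^ 2) := by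
    rw [inner_neg_right, real_inner_smul_right, real_inner_self_eq_norm_sq]
  have hnorm : ‖-(L⁻¹ • gradient f x)‖ ^ 2 = L⁻¹ ^ 2 * ‖gradient f x‖ ^ 2 := by
    rw [norm_neg, norm_smul]
    simp [abs_of_pos (inv_pos.mpr hL), mul_pow]
  rw [hinner, hnorm] at h
  have h2 := hy (x - L⁻¹ • gradient f x)
  have hLne : L ≠ 0 := hL.ne'
  have : f y ≤ f x - L⁻¹ / 2 * ‖gradient f x‖ ^ 2 := by
    have e : f x + -(L⁻¹ * ‖gradient f x‖ ^ 2) + L / 2 * (L⁻¹ ^ 2 * ‖gradient f x‖ ^ 2)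
        = f x - L⁻¹ / 2 * ‖gradient f x‖ ^ 2 := by
      field_simp
      ring
    linarith [e ▸ h, h2]
  have := mul_le_mul_of_nonneg_left (by linarith : L⁻¹ / 2 * ‖gradient f x‖ ^ 2 ≤ f x - f y)
    (by positivity : (0:ℝ) ≤ 2 * L)
  calc ‖gradient f x‖ ^ 2 = 2 * L * (L⁻¹ / 2 * ‖gradient f x‖ ^ 2) := by
        field_simp
    _ ≤ 2 * L * (f x - f y) := this

/-- Comparison of uncapped StoP and GraD step sizes: with exact lower bounds
`ℓᵢ = inf fᵢ = fᵢ(yᵢ)`, the uncapped StoP step size dominates `(1/L)·pgd ≥ 1/L`. -/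
theorem stop_ge_inv_L_pgd
    (d N n : ℕ) (hN : 1 ≤ N) (hn : 1 ≤ n)
    (f : Fin N → EuclideanSpace ℝ (Fin d) → ℝ)
    (hdiff : ∀ i, Differentiable ℝ (f i))
    (L : ℝ) (hL : 0 < L)
    (hsmooth : ∀ i (x y : EuclideanSpace ℝ (Fin d)),
      ‖gradient (f i) x - gradient (f i) y‖ ≤ L * ‖x - y‖)
    (y : Fin N → EuclideanSpace ℝ (Fin d))
    (hy : ∀ i (z : EuclideanSpace ℝ (Fin d)), f i (y i) ≤ f i z)
    (ℓ : Fin N → ℝ) (hℓ : ∀ i, ℓ i = f i (y i))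
    (x : EuclideanSpace ℝ (Fin d)) (s : Fin n → Fin N)
    (hgne : (n : ℝ)⁻¹ • ∑ j, gradient (f (s j)) x ≠ 0) :
    L⁻¹ * (((n : ℝ)⁻¹ * ∑ j, ‖gradient (f (s j)) x‖ ^ 2)
          / ‖(n : ℝ)⁻¹ • ∑ j, gradient (f (s j)) x‖ ^ 2)
        ≤ 2 * ((n : ℝ)⁻¹ * ∑ j, (f (s j) x - ℓ (s j)))
            / ‖(n : ℝ)⁻¹ • ∑ j, gradient (f (s j)) x‖ ^ 2
    ∧ L⁻¹ ≤ L⁻¹ * (((n : ℝ)⁻¹ * ∑ j, ‖gradient (f (s j)) x‖ ^ 2)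
          / ‖(n : ℝ)⁻¹ • ∑ j, gradient (f (s j)) x‖ ^ 2) := by
  set g : Fin n → EuclideanSpace ℝ (Fin d) := fun j => gradient (f (s j)) x with hgdef
  have hn' : (0:ℝ) < n := by exact_mod_cast hn
  have hD : 0 < ‖(n : ℝ)⁻¹ • ∑ j, g j‖ ^ 2 := by
    have := norm_pos_iff.mpr hgne
    positivity
  set D := ‖(n : ℝ)⁻¹ • ∑ j, g j‖ ^ 2 with hDdef
  set A := (n : ℝ)⁻¹ * ∑ j, ‖g j‖ ^ 2 with hAdef
  set B := (n : ℝ)⁻¹ * ∑ j, (f (s j) x - ℓ (s j)) with hBdef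
  have hper : ∀ j, ‖g j‖ ^ 2 ≤ 2 * L * (f (s j) x - ℓ (s j)) := by
    intro j
    rw [hℓ]
    exact grad_sq_le (f (s j)) (hdiff _) L hL (hsmooth _) (y (s j)) (hy _) x
  have hAB : A ≤ 2 * L * B := by
    rw [hAdef, hBdef]
    have := Finset.sum_le_sum (s := Finset.univ) (fun j _ => hper j)
    rw [← Finset.mul_sum] at this
    calc (n : ℝ)⁻¹ * ∑ j, ‖g j‖ ^ 2 ≤ (n : ℝ)⁻¹ * (2 * L * ∑ j, (f (s j) x - ℓ (s j))) :=
          mul_le_mul_of_nonneg_left this (by positivity)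
      _ = 2 * L * ((n : ℝ)⁻¹ * ∑ j, (f (s j) x - ℓ (s j))) := by ring
  have hDA : D ≤ A := by
    rw [hDdef, hAdef, norm_smul, mul_pow]
    have h1 : ‖∑ j, g j‖ ^ 2 ≤ (∑ j, ‖g j‖) ^ 2 := by
      have hs : (0:ℝ) ≤ ∑ j, ‖g j‖ := Finset.sum_nonneg (fun j _ => norm_nonneg (g j))
      apply sq_le_sq'
      · linarith [norm_nonneg (∑ j, g j)]
      · exact norm_sum_le Finset.univ g
    have h2 : (∑ j, ‖g j‖) ^ 2 ≤ (n : ℝ) * ∑ j, ‖g j‖ ^ 2 := by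
      have := sq_sum_le_card_mul_sum_sq (s := (Finset.univ : Finset (Fin n)))
        (f := fun j => ‖g j‖)
      simpa using this
    calc ‖(n : ℝ)⁻¹‖ ^ 2 * ‖∑ j, g j‖ ^ 2 ≤ ((n : ℝ)⁻¹) ^ 2 * ((n : ℝ) * ∑ j, ‖g j‖ ^ 2) := by
          rw [Real.norm_eq_abs, sq_abs]
          exact mul_le_mul_of_nonneg_left (h1.trans h2) (by positivity)
      _ = (n : ℝ)⁻¹ * ∑ j, ‖g j‖ ^ 2 := by field_simp
  constructor
  · rw [mul_div_assoc' , div_le_div_iff₀ hD hD]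
    have : L⁻¹ * A ≤ 2 * B := by
      have := mul_le_mul_of_nonneg_left hAB (by positivity : (0:ℝ) ≤ L⁻¹)
      calc L⁻¹ * A ≤ L⁻¹ * (2 * L * B) := this
        _ = 2 * B := by field_simp
    nlinarith
  · have h1 : (1:ℝ) ≤ A / D := (one_le_div hD).mpr hDA
    calc L⁻¹ = L⁻¹ * 1 := by ring
      _ ≤ L⁻¹ * (A / D) := mul_le_mul_of_nonneg_left h1 (by positivity)
end
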